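/- Let X be a nonnegative random variable with E[ X² / log log X ] < ∞. Then for any δ > 0, E[ min(X², 2δ n log log n) ] = o(log log n) as n → ∞, and E[ (X − δ√(2 n log log n))⁺ ] = o( √(log log n / n) ) as n → ∞. -/

import Mathlib

open MeasureTheory Filter Asymptotics

noncomputable def LL (x : ℝ) : ℝ :=
  Real.log (max (Real.exp 1) (Real.log (max (Real.exp 1) x)))

lemma exp_one_le_three : Real.exp 1 ≤ 3 :=
  (Real.exp_one_lt_d9.le.trans (by norm_num))

lemma one_le_exp_one : (1:ℝ) ≤ Real.exp 1 := by
  have := Real.add_one_le_exp (1:ℝ); linarith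

lemma LL_ge_one (x : ℝ) : 1 ≤ LL x := by
  have h : Real.exp 1 ≤ max (Real.exp 1) (Real.log (max (Real.exp 1) x)) := le_max_left _ _
  calc (1:ℝ) = Real.log (Real.exp 1) := (Real.log_exp 1).symm
    _ ≤ _ := Real.log_le_log (Real.exp_pos 1) h

lemma LL_pos (x : ℝ) : 0 < LL x := lt_of_lt_of_le one_pos (LL_ge_one x)

lemma LL_mono : Monotone LL := by
  intro a b hab
  apply Real.log_le_log (lt_of_lt_of_le (Real.exp_pos 1) (le_max_left _ _))
  apply max_le_max le_rfl
  apply Real.log_le_log (lt_of_lt_of_le (Real.exp_pos 1) (le_max_left _ _))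
  exact max_le_max le_rfl hab

lemma measurable_LL : Measurable LL :=
  Real.measurable_log.comp ((measurable_const.max
    (Real.measurable_log.comp (measurable_const.max measurable_id))))

lemma LL_le_log (x : ℝ) : LL x ≤ Real.log (max (Real.exp 1) x) := by
  apply Real.log_le_log (lt_of_lt_of_le (Real.exp_pos 1) (le_max_left _ _))
  apply max_le
  · exact le_max_left _ _
  · exact Real.log_le_self (le_trans (le_of_lt (Real.exp_pos 1)) (le_max_left _ _))

lemma LL_le_self {x : ℝ} (hx : 3 ≤ x) : LL x ≤ x := by
  have h1 : max (Real.exp 1) x = x := max_eq_right (exp_one_le_three.trans hx)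
  calc LL x ≤ Real.log (max (Real.exp 1) x) := LL_le_log x
    _ = Real.log x := by rw [h1]
    _ ≤ x := Real.log_le_self (by linarith)

lemma LL_lipschitz {a x : ℝ} (ha : Real.exp 1 ≤ a) (hax : a ≤ x) :
    LL x ≤ LL a + (x - a) / a := by
  have hea : (0:ℝ) < Real.exp 1 := Real.exp_pos 1
  have ha0 : (0:ℝ) < a := lt_of_lt_of_le hea ha
  have hx0 : (0:ℝ) < x := lt_of_lt_of_le ha0 hax
  have hmaxa : max (Real.exp 1) a = a := max_eq_right ha
  have hmaxx : max (Real.exp 1) x = x := max_eq_right (ha.trans hax)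
  set u := max (Real.exp 1) (Real.log x) with hu
  set v := max (Real.exp 1) (Real.log a) with hv
  have hvu : v ≤ u := max_le_max le_rfl (Real.log_le_log ha0 hax)
  have hv1 : (1:ℝ) ≤ v := le_trans one_le_exp_one (le_max_left _ _)
  have hv0 : (0:ℝ) < v := lt_of_lt_of_le one_pos hv1
  have hu0 : (0:ℝ) < u := lt_of_lt_of_le hv0 hvu
  have huv : u - v ≤ (x - a) / a := by
    rcases le_or_gt (Real.log x) (Real.exp 1) with h | h
    · have : u = Real.exp 1 := max_eq_left h
      have hv' : Real.exp 1 ≤ v := le_max_left _ _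
      have : u - v ≤ 0 := by rw [this]; linarith
      have : (0:ℝ) ≤ (x - a)/a := div_nonneg (by linarith) ha0.le
      linarith
    · have hu' : u = Real.log x := max_eq_right h.le
      have hv' : Real.log a ≤ v := le_max_right _ _
      have hlog : Real.log x - Real.log a = Real.log (x / a) := (Real.log_div hx0.ne' ha0.ne').symm
      have h2 : Real.log (x / a) ≤ x / a - 1 := Real.log_le_sub_one_of_pos (div_pos hx0 ha0)
      have h3 : x / a - 1 = (x - a) / a := by field_simp
      have : u - v ≤ Real.log x - Real.log a := by rw [hu']; linarith
      linarith
  have hlogs : Real.log u - Real.log v ≤ (u - v) / v := by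
    have : Real.log u - Real.log v = Real.log (u / v) := (Real.log_div hu0.ne' hv0.ne').symm
    have h2 : Real.log (u / v) ≤ u / v - 1 := Real.log_le_sub_one_of_pos (div_pos hu0 hv0)
    rw [this]
    have : u / v - 1 = (u - v) / v := by field_simp
    linarith
  have hdd : (u - v) / v ≤ u - v := by
    rw [div_le_iff₀ hv0]; nlinarith
  have hLLx : LL x = Real.log u := by rw [LL, hmaxx]
  have hLLa : LL a = Real.log v := by rw [LL, hmaxa]
  rw [hLLx, hLLa]
  have hfin : u - v ≤ (x - a)/a := huv
  linarith

lemma LL_key1 {a x : ℝ} (ha : Real.exp 1 ≤ a) (hax : a ≤ x) :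
    LL x * a ^ 2 ≤ LL a * x ^ 2 := by
  have h1 := LL_lipschitz ha hax
  have h2 := LL_ge_one a
  have ha0 : (0:ℝ) < a := lt_of_lt_of_le (Real.exp_pos 1) ha
  have h3 : LL x * a ^ 2 ≤ LL a * a ^ 2 + (x - a) * a := by
    have := mul_le_mul_of_nonneg_right h1 (sq_nonneg a)
    have he : (LL a + (x - a)/a) * a^2 = LL a * a^2 + (x-a)*a := by field_simp
    linarith
  have h4 : (x - a) * a ≤ (x - a) * (x + a) := by nlinarith
  have h5 : (x - a) * (x + a) ≤ LL a * ((x - a) * (x + a)) :=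
    le_mul_of_one_le_left (by nlinarith) h2
  nlinarith

lemma LL_key2 {a x : ℝ} (ha : Real.exp 1 ≤ a) (hax : a ≤ x) :
    LL x * a ≤ LL a * x := by
  have h1 := LL_lipschitz ha hax
  have h2 := LL_ge_one a
  have ha0 : (0:ℝ) < a := lt_of_lt_of_le (Real.exp_pos 1) ha
  have h3 : LL x * a ≤ LL a * a + (x - a) := by
    have := mul_le_mul_of_nonneg_right h1 ha0.le
    have he : (LL a + (x - a)/a) * a = LL a * a + (x-a) := by field_simp
    linarith
  have h4 : (x - a) ≤ LL a * (x - a) := le_mul_of_one_le_left (by linarith) h2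
  nlinarith

lemma LL_tendsto : Tendsto (fun n : ℕ => LL (n : ℝ)) atTop atTop := by
  have t1 : Tendsto (fun x : ℝ => max (Real.exp 1) x) atTop atTop :=
    tendsto_atTop_mono (fun x => le_max_right _ _) tendsto_id
  have t2 := Real.tendsto_log_atTop.comp t1
  have t3 := t1.comp t2
  have t4 := Real.tendsto_log_atTop.comp t3
  exact t4.comp tendsto_natCast_atTop_atTop

lemma LL_sq_le {x : ℝ} (hx : 3 ≤ x) : LL (x ^ 2) ≤ Real.log 2 + LL x := by
  have hx0 : (0:ℝ) < x := by linarith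
  have h1 : max (Real.exp 1) (x ^ 2) = x ^ 2 := max_eq_right (by nlinarith [exp_one_le_three])
  have h2 : max (Real.exp 1) x = x := max_eq_right (exp_one_le_three.trans hx)
  have hlogx1 : (1:ℝ) ≤ Real.log x := by
    rw [← Real.log_exp 1]
    exact Real.log_le_log (Real.exp_pos 1) (exp_one_le_three.trans hx)
  have hlogsq : Real.log (x ^ 2) = 2 * Real.log x := by
    rw [Real.log_pow]; norm_num
  have hmax2 : max (Real.exp 1) (2 * Real.log x) ≤ 2 * max (Real.exp 1) (Real.log x) := by
    apply max_le
    · nlinarith [Real.exp_pos 1, le_max_left (Real.exp 1) (Real.log x)]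
    · nlinarith [le_max_right (Real.exp 1) (Real.log x)]
  have hpos : (0:ℝ) < max (Real.exp 1) (2 * Real.log x) :=
    lt_of_lt_of_le (Real.exp_pos 1) (le_max_left _ _)
  have hpos2 : (0:ℝ) < max (Real.exp 1) (Real.log x) :=
    lt_of_lt_of_le (Real.exp_pos 1) (le_max_left _ _)
  calc LL (x ^ 2) = Real.log (max (Real.exp 1) (2 * Real.log x)) := by
        rw [LL, h1, hlogsq]
    _ ≤ Real.log (2 * max (Real.exp 1) (Real.log x)) := Real.log_le_log hpos hmax2
    _ = Real.log 2 + Real.log (max (Real.exp 1) (Real.log x)) :=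
        Real.log_mul (by norm_num) hpos2.ne'
    _ = Real.log 2 + LL x := by rw [LL, h2]

lemma sqrt_tendsto : Tendsto Real.sqrt atTop atTop := by
  rw [tendsto_atTop]
  intro b
  filter_upwards [eventually_ge_atTop (b ^ 2)] with x h1
  calc b ≤ |b| := le_abs_self b
    _ = Real.sqrt (b ^ 2) := (Real.sqrt_sq_eq_abs b).symm
    _ ≤ Real.sqrt x := Real.sqrt_le_sqrt h1

lemma tail_tendsto {Ω : Type*} [MeasurableSpace Ω] (μ : Measure Ω) [IsProbabilityMeasure μ]
    (X : Ω → ℝ) (hX : Measurable X)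
    (hint : Integrable (fun ω => (X ω) ^ 2 / LL (X ω)) μ)
    (c : ℕ → ℝ) (hc : Tendsto c atTop atTop) :
    Tendsto (fun n => ∫ ω, Set.indicator {ω | c n < X ω}
      (fun ω => (X ω) ^ 2 / LL (X ω)) ω ∂μ) atTop (nhds 0) := by
  have hgnn : ∀ ω, 0 ≤ (X ω) ^ 2 / LL (X ω) := fun ω => div_nonneg (sq_nonneg _) (LL_pos _).le
  have hm : Measurable (fun ω => (X ω) ^ 2 / LL (X ω)) :=
    (hX.pow_const 2).div (measurable_LL.comp hX)
  have h0 : (0:ℝ) = ∫ ω, (0:ℝ) ∂μ := by simp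
  rw [h0]
  apply tendsto_integral_of_dominated_convergence (fun ω => (X ω) ^ 2 / LL (X ω))
  · intro n
    exact (hm.indicator (measurableSet_lt measurable_const hX)).aestronglyMeasurable
  · exact hint
  · intro n
    filter_upwards [] with ω
    rw [Real.norm_eq_abs, abs_of_nonneg (Set.indicator_nonneg (fun x _ => hgnn x) ω)]
    exact Set.indicator_le_self' (fun x _ => hgnn x) ω
  · filter_upwards [] with ω
    have hev : ∀ᶠ n in atTop, (0:ℝ) =
        Set.indicator {ω | c n < X ω} (fun ω => (X ω) ^ 2 / LL (X ω)) ω := by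
      filter_upwards [hc.eventually (eventually_ge_atTop (X ω))] with n hn
      rw [Set.indicator_of_notMem]
      simpa using hn
    exact Tendsto.congr' hev tendsto_const_nhds
set_option maxHeartbeats 1000000 in
/-- If `E[X²/log log X] < ∞` then for any `δ > 0`:
`E[min(X², 2δ n log log n)] = o(log log n)` and
`E[(X − δ√(2 n log log n))⁺] = o(√(log log n / n))` as `n → ∞`. -/
theorem stmt5 {Ω : Type*} [MeasurableSpace Ω] (μ : Measure Ω) [IsProbabilityMeasure μ]
    (X : Ω → ℝ) (hX : Measurable X) (hpos : ∀ ω, 0 ≤ X ω)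
    (hint : Integrable (fun ω => (X ω) ^ 2 / LL (X ω)) μ)
    (δ : ℝ) (hδ : 0 < δ) :
    ((fun n : ℕ => ∫ ω, min ((X ω) ^ 2) (2 * δ * (n : ℝ) * LL (n : ℝ)) ∂μ)
        =o[atTop] fun n : ℕ => LL (n : ℝ)) ∧
      ((fun n : ℕ => ∫ ω, max (X ω - δ * Real.sqrt (2 * (n : ℝ) * LL (n : ℝ))) 0 ∂μ)
        =o[atTop] fun n : ℕ => Real.sqrt (LL (n : ℝ) / (n : ℝ))) := by
  have he3 : Real.exp 1 ≤ 3 := exp_one_le_three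
  have hgnn : ∀ ω, 0 ≤ (X ω) ^ 2 / LL (X ω) := fun ω => div_nonneg (sq_nonneg _) (LL_pos _).le
  have hFint : ∀ c : ℝ, Integrable (Set.indicator {ω | c < X ω}
      (fun ω => (X ω) ^ 2 / LL (X ω))) μ :=
    fun c => hint.indicator (measurableSet_lt measurable_const hX)
  have hFnn : ∀ (c : ℝ) ω, 0 ≤ Set.indicator {ω | c < X ω}
      (fun ω => (X ω) ^ 2 / LL (X ω)) ω :=
    fun c ω => Set.indicator_nonneg (fun x _ => hgnn x) ω
  constructor
  · -- Part 1
    rw [isLittleO_iff]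
    intro ε hε
    have h2δ : (0:ℝ) < 1 + 2 * δ := by linarith
    set ε' : ℝ := ε / (2 * (1 + 2 * δ)) with hε'def
    have hε'pos : 0 < ε' := by positivity
    have hT := tail_tendsto μ X hX hint (fun m : ℕ => (m : ℝ)) tendsto_natCast_atTop_atTop
    have hTev : ∀ᶠ m : ℕ in atTop, (∫ ω, Set.indicator {ω | (m:ℝ) < X ω}
        (fun ω => (X ω) ^ 2 / LL (X ω)) ω ∂μ) < ε' := hT.eventually (gt_mem_nhds hε'pos)
    obtain ⟨M, hM3, hTM⟩ : ∃ M : ℕ, 3 ≤ M ∧ (∫ ω, Set.indicator {ω | (M:ℝ) < X ω}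
        (fun ω => (X ω) ^ 2 / LL (X ω)) ω ∂μ) < ε' := by
      rcases (hTev.and (eventually_ge_atTop 3)).exists with ⟨M, h1, h2⟩
      exact ⟨M, h2, h1⟩
    set T : ℝ := ∫ ω, Set.indicator {ω | (M:ℝ) < X ω}
        (fun ω => (X ω) ^ 2 / LL (X ω)) ω ∂μ with hTdef
    have hTnn : 0 ≤ T := integral_nonneg (hFnn _)
    have hM3' : (3:ℝ) ≤ (M:ℝ) := by exact_mod_cast hM3
    have hLLev : ∀ᶠ n : ℕ in atTop, 2 * (M:ℝ)^2 / ε ≤ LL (n:ℝ) :=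
      LL_tendsto.eventually (eventually_ge_atTop _)
    filter_upwards [hLLev, eventually_ge_atTop M, eventually_ge_atTop 3] with n hLLn hnM hn3
    have hn3' : (3:ℝ) ≤ (n:ℝ) := by exact_mod_cast hn3
    have hnM' : (M:ℝ) ≤ (n:ℝ) := by exact_mod_cast hnM
    have hLL1 : (1:ℝ) ≤ LL (n:ℝ) := LL_ge_one _
    have hLLpos : (0:ℝ) < LL (n:ℝ) := LL_pos _
    have hann : 0 ≤ 2 * δ * (n:ℝ) * LL (n:ℝ) := by positivity
    have hintnn : ∀ ω, 0 ≤ min ((X ω) ^ 2) (2 * δ * (n:ℝ) * LL (n:ℝ)) :=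
      fun ω => le_min (sq_nonneg _) hann
    -- pointwise bound
    have hptwise : ∀ ω, min ((X ω) ^ 2) (2 * δ * (n:ℝ) * LL (n:ℝ)) ≤
        (M:ℝ)^2 + ((1 + 2*δ) * LL (n:ℝ)) * Set.indicator {ω | (M:ℝ) < X ω}
          (fun ω => (X ω) ^ 2 / LL (X ω)) ω := by
      intro ω
      have hx0 : 0 ≤ X ω := hpos ω
      have hindnn := hFnn (M:ℝ) ω
      have hcoef : (0:ℝ) ≤ (1 + 2*δ) * LL (n:ℝ) := by positivity
      rcases le_or_gt (X ω) (M:ℝ) with hxM | hxM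
      · have h1 : (X ω)^2 ≤ (M:ℝ)^2 := by nlinarith
        have h2 := min_le_left ((X ω) ^ 2) (2 * δ * (n:ℝ) * LL (n:ℝ))
        linarith [mul_nonneg hcoef hindnn]
      · have hind : Set.indicator {ω | (M:ℝ) < X ω} (fun ω => (X ω) ^ 2 / LL (X ω)) ω
            = (X ω) ^ 2 / LL (X ω) :=
          Set.indicator_of_mem (show ω ∈ {ω | (M:ℝ) < X ω} from hxM) _
        have hxe : Real.exp 1 ≤ X ω := he3.trans (hM3'.trans hxM.le)
        have hLLxpos : (0:ℝ) < LL (X ω) := LL_pos _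
        have hgx : (X ω) ^ 2 / LL (X ω) * LL (X ω) = (X ω)^2 :=
          div_mul_cancel₀ _ hLLxpos.ne'
        rcases le_or_gt (X ω) (n:ℝ) with hxn | hxn
        · have hLLle : LL (X ω) ≤ LL (n:ℝ) := LL_mono hxn
          have h2 := min_le_left ((X ω) ^ 2) (2 * δ * (n:ℝ) * LL (n:ℝ))
          rw [hind]
          have hgnn' := hgnn ω
          linarith [mul_le_mul_of_nonneg_left hLLle hgnn',
            mul_nonneg (mul_nonneg hδ.le hLLpos.le) hgnn', sq_nonneg (M:ℝ)]
        · have hne : Real.exp 1 ≤ (n:ℝ) := he3.trans hn3'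
          have hkey := LL_key1 hne hxn.le
          have hLLn_le : LL (n:ℝ) ≤ (n:ℝ) := LL_le_self hn3'
          have hnpos : (0:ℝ) < (n:ℝ) := by linarith
          have hLLxp : (0:ℝ) < LL (X ω) := LL_pos _
          -- n ≤ g ω
          have hng : (n:ℝ) ≤ (X ω) ^ 2 / LL (X ω) := by
            rw [le_div_iff₀ hLLxp]
            nlinarith [mul_le_mul_of_nonneg_right hLLn_le (sq_nonneg (X ω))]
          have h2 := min_le_right ((X ω) ^ 2) (2 * δ * (n:ℝ) * LL (n:ℝ))
          rw [hind]
          have hgnn' := hgnn ω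
          linarith [mul_le_mul_of_nonneg_left hng (by positivity : (0:ℝ) ≤ 2 * δ * LL (n:ℝ)),
            mul_nonneg hLLpos.le hgnn', sq_nonneg (M:ℝ)]
    -- integrate
    have hmono : (∫ ω, min ((X ω) ^ 2) (2 * δ * (n:ℝ) * LL (n:ℝ)) ∂μ) ≤
        ∫ ω, ((M:ℝ)^2 + ((1 + 2*δ) * LL (n:ℝ)) * Set.indicator {ω | (M:ℝ) < X ω}
          (fun ω => (X ω) ^ 2 / LL (X ω)) ω) ∂μ := by
      apply integral_mono_of_nonneg
      · filter_upwards [] with ω; exact hintnn ω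
      · exact (integrable_const _).add ((hFint (M:ℝ)).const_mul _)
      · filter_upwards [] with ω; exact hptwise ω
    have hcalc : (∫ ω, ((M:ℝ)^2 + ((1 + 2*δ) * LL (n:ℝ)) * Set.indicator {ω | (M:ℝ) < X ω}
          (fun ω => (X ω) ^ 2 / LL (X ω)) ω) ∂μ) = (M:ℝ)^2 + ((1 + 2*δ) * LL (n:ℝ)) * T := by
      rw [integral_add (integrable_const _) ((hFint (M:ℝ)).const_mul _),
        integral_const, integral_const_mul]
      simp [hTdef]
    have hIn : (0:ℝ) ≤ ∫ ω, min ((X ω) ^ 2) (2 * δ * (n:ℝ) * LL (n:ℝ)) ∂μ :=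
      integral_nonneg hintnn
    rw [Real.norm_eq_abs, Real.norm_eq_abs, abs_of_nonneg hIn, abs_of_nonneg hLLpos.le]
    have hM2 : (M:ℝ)^2 ≤ ε/2 * LL (n:ℝ) := by
      have : 2 * (M:ℝ)^2 / ε ≤ LL (n:ℝ) := hLLn
      rw [div_le_iff₀ hε] at this
      linarith
    have hTterm : ((1 + 2*δ) * LL (n:ℝ)) * T ≤ ε/2 * LL (n:ℝ) := by
      have h1 : ((1 + 2*δ) * LL (n:ℝ)) * T ≤ ((1 + 2*δ) * LL (n:ℝ)) * ε' := by
        apply mul_le_mul_of_nonneg_left hTM.le (by positivity)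
      have h2 : ((1 + 2*δ) * LL (n:ℝ)) * ε' = ε/2 * LL (n:ℝ) := by
        rw [hε'def]; field_simp
      linarith
    calc (∫ ω, min ((X ω) ^ 2) (2 * δ * (n:ℝ) * LL (n:ℝ)) ∂μ)
        ≤ (M:ℝ)^2 + ((1 + 2*δ) * LL (n:ℝ)) * T := by rw [← hcalc]; exact hmono
      _ ≤ ε/2 * LL (n:ℝ) + ε/2 * LL (n:ℝ) := add_le_add hM2 hTterm
      _ = ε * LL (n:ℝ) := by ring
  · -- Part 2
    rw [isLittleO_iff]
    intro ε hε
    set c : ℕ → ℝ := fun n => δ * Real.sqrt (2 * (n:ℝ) * LL (n:ℝ)) with hcdef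
    have hc : Tendsto c atTop atTop := by
      have base : Tendsto (fun n : ℕ => δ * Real.sqrt (n:ℝ)) atTop atTop :=
        (sqrt_tendsto.comp tendsto_natCast_atTop_atTop).const_mul_atTop hδ
      apply tendsto_atTop_mono _ base
      intro n
      have h2 : (n:ℝ) ≤ 2 * (n:ℝ) * LL (n:ℝ) := by
        nlinarith [LL_ge_one ((n:ℝ)), (Nat.cast_nonneg n : (0:ℝ) ≤ (n:ℝ))]
      exact mul_le_mul_of_nonneg_left (Real.sqrt_le_sqrt h2) hδ.le
    have hT := tail_tendsto μ X hX hint c hc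
    have hsq2 : (0:ℝ) < Real.sqrt 2 := Real.sqrt_pos.2 (by norm_num)
    set ε' : ℝ := ε * δ / Real.sqrt 2 with hε'def
    have hε'pos : 0 < ε' := by positivity
    have E1 : ∀ᶠ n : ℕ in atTop, (∫ ω, Set.indicator {ω | c n < X ω}
        (fun ω => (X ω)^2 / LL (X ω)) ω ∂μ) < ε' := hT.eventually (gt_mem_nhds hε'pos)
    have E2 : ∀ᶠ n : ℕ in atTop, (3:ℝ) ≤ c n := hc.eventually (eventually_ge_atTop 3)
    have E4 : ∀ᶠ n : ℕ in atTop, c n ≤ (n:ℝ)^2 := by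
      have EK : ∀ᶠ n : ℕ in atTop, δ * Real.sqrt 2 ≤ (n:ℝ) :=
        tendsto_natCast_atTop_atTop.eventually (eventually_ge_atTop _)
      filter_upwards [EK, eventually_ge_atTop 3] with n hK hn3
      have hn3' : (3:ℝ) ≤ (n:ℝ) := by exact_mod_cast hn3
      have hn0 : (0:ℝ) ≤ (n:ℝ) := by linarith
      have hLn : LL (n:ℝ) ≤ (n:ℝ) := LL_le_self hn3'
      have h1 : 2 * (n:ℝ) * LL (n:ℝ) ≤ 2 * ((n:ℝ) * (n:ℝ)) := by
        nlinarith [LL_ge_one (n:ℝ)]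
      have h2 : Real.sqrt (2 * (n:ℝ) * LL (n:ℝ)) ≤ Real.sqrt 2 * (n:ℝ) := by
        calc Real.sqrt (2 * (n:ℝ) * LL (n:ℝ)) ≤ Real.sqrt (2 * ((n:ℝ) * (n:ℝ))) :=
              Real.sqrt_le_sqrt h1
          _ = Real.sqrt 2 * Real.sqrt ((n:ℝ) * (n:ℝ)) := Real.sqrt_mul (by norm_num) _
          _ = Real.sqrt 2 * (n:ℝ) := by rw [Real.sqrt_mul_self hn0]
      calc c n ≤ δ * (Real.sqrt 2 * (n:ℝ)) := mul_le_mul_of_nonneg_left h2 hδ.le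
        _ = (δ * Real.sqrt 2) * (n:ℝ) := by ring
        _ ≤ (n:ℝ) * (n:ℝ) := mul_le_mul_of_nonneg_right hK hn0
        _ = (n:ℝ)^2 := (sq (n:ℝ)).symm
    filter_upwards [E1, E2, E4, eventually_ge_atTop 3] with n hE1 hE2 hE4 hn3
    set T : ℝ := ∫ ω, Set.indicator {ω | c n < X ω}
        (fun ω => (X ω)^2 / LL (X ω)) ω ∂μ with hTdef
    have hTnn : 0 ≤ T := integral_nonneg (hFnn _)
    have hn3' : (3:ℝ) ≤ (n:ℝ) := by exact_mod_cast hn3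
    have hnpos : (0:ℝ) < (n:ℝ) := by linarith
    have hcpos : (0:ℝ) < c n := by linarith
    have hLLpos : (0:ℝ) < LL (n:ℝ) := LL_pos _
    have hLLcn : LL (c n) ≤ 2 * LL (n:ℝ) := by
      have h1 : LL (c n) ≤ LL ((n:ℝ)^2) := LL_mono hE4
      have h2 : LL ((n:ℝ)^2) ≤ Real.log 2 + LL (n:ℝ) := LL_sq_le hn3'
      have h3 : Real.log 2 ≤ 1 :=
        le_trans (Real.log_le_sub_one_of_pos (by norm_num)) (by norm_num)
      linarith [LL_ge_one (n:ℝ)]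
    have hptwise : ∀ ω, max (X ω - c n) 0 ≤ (2 * LL (n:ℝ) / c n) *
        Set.indicator {ω | c n < X ω} (fun ω => (X ω)^2 / LL (X ω)) ω := by
      intro ω
      have hindnn := hFnn (c n) ω
      have hcoefnn : 0 ≤ 2 * LL (n:ℝ) / c n := by positivity
      have hrhs : 0 ≤ (2 * LL (n:ℝ) / c n) *
          Set.indicator {ω | c n < X ω} (fun ω => (X ω)^2 / LL (X ω)) ω :=
        mul_nonneg hcoefnn hindnn
      rcases le_or_gt (X ω) (c n) with hxc | hxc
      · exact max_le (by linarith) hrhs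
      · have hind : Set.indicator {ω | c n < X ω} (fun ω => (X ω)^2 / LL (X ω)) ω
            = (X ω)^2 / LL (X ω) :=
          Set.indicator_of_mem (show ω ∈ {ω | c n < X ω} from hxc) _
        apply max_le _ hrhs
        have hLLxp : (0:ℝ) < LL (X ω) := LL_pos _
        have hkey := LL_key2 (he3.trans hE2) hxc.le
        have hgx : (X ω)^2 / LL (X ω) * LL (X ω) = (X ω)^2 :=
          div_mul_cancel₀ _ hLLxp.ne'
        rw [hind]
        have hmain : X ω * c n ≤ 2 * LL (n:ℝ) * ((X ω)^2 / LL (X ω)) := by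
          apply le_of_mul_le_mul_right _ hLLxp
          calc X ω * c n * LL (X ω) = (LL (X ω) * c n) * X ω := by ring
            _ ≤ (LL (c n) * X ω) * X ω := mul_le_mul_of_nonneg_right hkey (hpos ω)
            _ = LL (c n) * (X ω)^2 := by ring
            _ ≤ 2 * LL (n:ℝ) * (X ω)^2 := mul_le_mul_of_nonneg_right hLLcn (sq_nonneg _)
            _ = 2 * LL (n:ℝ) * ((X ω)^2 / LL (X ω)) * LL (X ω) := by
                rw [mul_assoc (2 * LL (n:ℝ)), hgx]
        have hfin : X ω ≤ 2 * LL (n:ℝ) / c n * ((X ω)^2 / LL (X ω)) := by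
          rw [div_mul_eq_mul_div, le_div_iff₀ hcpos]
          linarith
        linarith
    have hmono : (∫ ω, max (X ω - c n) 0 ∂μ) ≤ (2 * LL (n:ℝ) / c n) * T := by
      rw [hTdef, ← integral_const_mul]
      apply integral_mono_of_nonneg
      · filter_upwards [] with ω; exact le_max_right _ _
      · exact (hFint (c n)).const_mul _
      · filter_upwards [] with ω; exact hptwise ω
    have hInn : 0 ≤ ∫ ω, max (X ω - c n) 0 ∂μ :=
      integral_nonneg (fun ω => le_max_right _ _)
    have hsnn : 0 ≤ Real.sqrt (LL (n:ℝ) / (n:ℝ)) := Real.sqrt_nonneg _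
    rw [Real.norm_eq_abs, Real.norm_eq_abs, abs_of_nonneg hInn, abs_of_nonneg hsnn]
    have heq : 2 * LL (n:ℝ) / c n = Real.sqrt 2 / δ * Real.sqrt (LL (n:ℝ) / (n:ℝ)) := by
      have hL0 : 0 ≤ LL (n:ℝ) := hLLpos.le
      have h1 : Real.sqrt (2 * (n:ℝ) * LL (n:ℝ))
          = Real.sqrt 2 * Real.sqrt (n:ℝ) * Real.sqrt (LL (n:ℝ)) := by
        rw [Real.sqrt_mul (by positivity), Real.sqrt_mul (by norm_num)]
      have h2 : Real.sqrt (LL (n:ℝ) / (n:ℝ)) = Real.sqrt (LL (n:ℝ)) / Real.sqrt (n:ℝ) :=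
        Real.sqrt_div hL0 _
      have hs : Real.sqrt (LL (n:ℝ)) * Real.sqrt (LL (n:ℝ)) = LL (n:ℝ) :=
        Real.mul_self_sqrt hL0
      have hr : Real.sqrt 2 * Real.sqrt 2 = 2 := Real.mul_self_sqrt (by norm_num)
      have ht0 : 0 < Real.sqrt (n:ℝ) := Real.sqrt_pos.2 hnpos
      have hs0 : 0 < Real.sqrt (LL (n:ℝ)) := Real.sqrt_pos.2 hLLpos
      show 2 * LL (n:ℝ) / (δ * Real.sqrt (2 * (n:ℝ) * LL (n:ℝ)))
          = Real.sqrt 2 / δ * Real.sqrt (LL (n:ℝ) / (n:ℝ))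
      rw [h1, h2]
      field_simp
      linear_combination (-(Real.sqrt (LL (n:ℝ)) * Real.sqrt (LL (n:ℝ)))) * hr
        - 2 * hs
    have h5 : (2 * LL (n:ℝ) / c n) * T ≤ (2 * LL (n:ℝ) / c n) * ε' :=
      mul_le_mul_of_nonneg_left hE1.le (by positivity)
    have h6 : (2 * LL (n:ℝ) / c n) * ε' = ε * Real.sqrt (LL (n:ℝ) / (n:ℝ)) := by
      rw [heq, hε'def]
      field_simp
    calc (∫ ω, max (X ω - c n) 0 ∂μ) ≤ (2 * LL (n:ℝ) / c n) * T := hmono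
      _ ≤ (2 * LL (n:ℝ) / c n) * ε' := h5
      _ = ε * Real.sqrt (LL (n:ℝ) / (n:ℝ)) := h6
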